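/- Let n, b, K be positive integers with 2n ≤ b. Then the number of functions g : Fin K → (Fin n → Fin b) such that for every i ∈ Fin K and every j ∈ Fin b the set {x ∈ Fin n : g i x = j} does not have exactly one element, is at most ((4n/b)^{n/2})^K · b^{nK} (as real numbers). Equivalently, for K independent uniformly random assignments of n balls into b bins, the probability that in none of the K assignments some bin contains exactly one ball is at most (4n/b)^{nK/2}. -/
import Mathlib

open Finset

lemma pow_self_le_four_pow_mul_factorial (m : ℕ) :
    (m : ℝ) ^ m ≤ 4 ^ m * (Nat.factorial m : ℝ) := by
  induction m with
  | zero => simp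
  | succ m ih =>
    rcases Nat.eq_zero_or_pos m with hm | hm
    · subst hm; norm_num [Nat.factorial]
    have hm' : (0 : ℝ) < m := by exact_mod_cast hm
    have key : ((m : ℝ) + 1) ^ m ≤ 3 * (m : ℝ) ^ m := by
      have h1 : (m : ℝ) + 1 ≤ m * Real.exp (1 / m) := by
        have := Real.add_one_le_exp (1 / (m : ℝ))
        have := mul_le_mul_of_nonneg_left this (le_of_lt hm')
        calc (m : ℝ) + 1 = m * (1 / m + 1) := by field_simp; ring
          _ ≤ m * Real.exp (1 / m) := this
      have h2 : ((m : ℝ) + 1) ^ m ≤ ((m : ℝ) * Real.exp (1 / m)) ^ m := by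
        apply pow_le_pow_left₀ (by positivity) h1 m
      have h3 : ((m : ℝ) * Real.exp (1 / m)) ^ m
          = (m : ℝ) ^ m * Real.exp 1 := by
        rw [mul_pow, ← Real.exp_nat_mul]
        congr 2
        field_simp
      have h4 : Real.exp 1 ≤ 3 := le_of_lt (lt_trans Real.exp_one_lt_d9 (by norm_num))
      calc ((m : ℝ) + 1) ^ m ≤ (m : ℝ) ^ m * Real.exp 1 := by rw [← h3]; exact h2
        _ ≤ (m : ℝ) ^ m * 3 := by
            apply mul_le_mul_of_nonneg_left h4 (by positivity)
        _ = 3 * (m : ℝ) ^ m := by ring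
    have hfact : (Nat.factorial (m + 1) : ℝ) = ((m : ℝ) + 1) * Nat.factorial m := by
      push_cast [Nat.factorial_succ]; ring
    have hmfpos : (0 : ℝ) ≤ (Nat.factorial m : ℝ) := by positivity
    calc ((m + 1 : ℕ) : ℝ) ^ (m + 1) = ((m : ℝ) + 1) * ((m : ℝ) + 1) ^ m := by
          push_cast; ring
      _ ≤ ((m : ℝ) + 1) * (3 * (m : ℝ) ^ m) := by
          apply mul_le_mul_of_nonneg_left key (by positivity)
      _ ≤ ((m : ℝ) + 1) * (3 * (4 ^ m * (Nat.factorial m : ℝ))) := by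
          apply mul_le_mul_of_nonneg_left _ (by positivity)
          apply mul_le_mul_of_nonneg_left ih (by norm_num)
      _ ≤ 4 ^ (m + 1) * (Nat.factorial (m + 1) : ℝ) := by
          rw [hfact]
          ring_nf
          nlinarith [pow_pos (show (0:ℝ) < 4 by norm_num) m, hm', hmfpos]

lemma single_bound (n b : ℕ) (hn : 0 < n) (hb : 0 < b) (hnb : 2 * n ≤ b) :
    ((Finset.univ.filter (fun f : Fin n → Fin b =>
        ∀ j : Fin b, (Finset.univ.filter (fun x : Fin n => f x = j)).card ≠ 1)).card : ℝ)
      ≤ (4 * (n : ℝ) / (b : ℝ)) ^ ((n : ℝ) / 2) * (b : ℝ) ^ n := by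
  classical
  set m := n / 2 with hm
  -- Step 1: any f in the filter has image of size ≤ m
  have himg : ∀ f : Fin n → Fin b,
      (∀ j : Fin b, (Finset.univ.filter (fun x : Fin n => f x = j)).card ≠ 1) →
      (Finset.univ.image f).card ≤ m := by
    intro f hf
    have hsum : (Finset.univ : Finset (Fin n)).card
        = ∑ j ∈ Finset.univ.image f, (Finset.univ.filter (fun x => f x = j)).card :=
      Finset.card_eq_sum_card_fiberwise (fun x _ => Finset.mem_image_of_mem f (Finset.mem_univ x))
    have h2 : ∀ j ∈ Finset.univ.image f,
        2 ≤ (Finset.univ.filter (fun x => f x = j)).card := by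
      intro j hj
      obtain ⟨x, -, hx⟩ := Finset.mem_image.mp hj
      have h1 : 1 ≤ (Finset.univ.filter (fun x => f x = j)).card :=
        Finset.card_pos.mpr ⟨x, Finset.mem_filter.mpr ⟨Finset.mem_univ x, hx⟩⟩
      have := hf j
      omega
    have hge : 2 * (Finset.univ.image f).card ≤ n := by
      calc 2 * (Finset.univ.image f).card = ∑ _j ∈ Finset.univ.image f, 2 := by
            rw [Finset.sum_const, smul_eq_mul, mul_comm]
        _ ≤ ∑ j ∈ Finset.univ.image f, (Finset.univ.filter (fun x => f x = j)).card :=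
            Finset.sum_le_sum h2
        _ = n := by rw [← hsum, Finset.card_univ, Fintype.card_fin]
    omega
  have hmb : m ≤ b := by omega
  set t := n - m with ht
  clear_value t
  have hmt : m + t = n := by omega
  have h2m : 2 * m ≤ n := by omega
  have hm2 : (m : ℝ) ≤ (n : ℝ) / 2 := by
    rw [le_div_iff₀ (by norm_num : (0:ℝ) < 2)]
    have : m * 2 ≤ n := by omega
    exact_mod_cast this
  have ht2 : (n : ℝ) / 2 ≤ (t : ℝ) := by
    rw [div_le_iff₀ (by norm_num : (0:ℝ) < 2)]
    have : n ≤ t * 2 := by omega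
    exact_mod_cast this
  -- Step 2: cover by functions with range in a fixed m-set
  have hsubset : (Finset.univ.filter (fun f : Fin n → Fin b =>
        ∀ j : Fin b, (Finset.univ.filter (fun x : Fin n => f x = j)).card ≠ 1)) ⊆
      (Finset.powersetCard m (Finset.univ : Finset (Fin b))).biUnion
        (fun T => Finset.univ.filter (fun f : Fin n → Fin b => ∀ x, f x ∈ T)) := by
    intro f hf
    rw [Finset.mem_filter] at hf
    obtain ⟨T, hsub, -, hcard⟩ := Finset.exists_subsuperset_card_eq
      (Finset.subset_univ (Finset.univ.image f)) (himg f hf.2)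
      (by rw [Finset.card_univ, Fintype.card_fin]; exact hmb)
    exact Finset.mem_biUnion.mpr ⟨T, Finset.mem_powersetCard_univ.mpr hcard,
      Finset.mem_filter.mpr ⟨Finset.mem_univ f,
        fun x => hsub (Finset.mem_image_of_mem f (Finset.mem_univ x))⟩⟩
  -- Step 3: count
  have hcount : ∀ T : Finset (Fin b),
      (Finset.univ.filter (fun f : Fin n → Fin b => ∀ x, f x ∈ T)).card = T.card ^ n := by
    intro T
    have hpi : (Finset.univ.filter (fun f : Fin n → Fin b => ∀ x, f x ∈ T))
        = Fintype.piFinset (fun _ : Fin n => T) := by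
      ext f; simp [Fintype.mem_piFinset]
    rw [hpi, Fintype.card_piFinset]
    simp
  have hnat : (Finset.univ.filter (fun f : Fin n → Fin b =>
        ∀ j : Fin b, (Finset.univ.filter (fun x : Fin n => f x = j)).card ≠ 1)).card
      ≤ b.choose m * m ^ n := by
    calc _ ≤ ((Finset.powersetCard m (Finset.univ : Finset (Fin b))).biUnion
          (fun T => Finset.univ.filter (fun f : Fin n → Fin b => ∀ x, f x ∈ T))).card :=
          Finset.card_le_card hsubset
      _ ≤ ∑ T ∈ Finset.powersetCard m (Finset.univ : Finset (Fin b)),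
          (Finset.univ.filter (fun f : Fin n → Fin b => ∀ x, f x ∈ T)).card :=
          Finset.card_biUnion_le
      _ = ∑ T ∈ Finset.powersetCard m (Finset.univ : Finset (Fin b)), m ^ n := by
          apply Finset.sum_congr rfl
          intro T hT
          rw [hcount T, (Finset.mem_powersetCard_univ.mp hT)]
      _ = b.choose m * m ^ n := by
          rw [Finset.sum_const, smul_eq_mul, Finset.card_powersetCard,
            Finset.card_univ, Fintype.card_fin]
  -- Step 4: real estimate
  have hbpos : (0:ℝ) < b := by exact_mod_cast hb
  have hnpos : (0:ℝ) < n := by exact_mod_cast hn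
  have hxpos : (0:ℝ) < (n : ℝ) / (2 * b) := by positivity
  have hx1 : (n : ℝ) / (2 * b) ≤ 1 := by
    rw [div_le_one (by positivity)]
    have : (n:ℝ) ≤ 2 * n := by linarith
    calc (n:ℝ) ≤ 2 * n := this
      _ ≤ b := by exact_mod_cast hnb
      _ ≤ 2 * b := by linarith
  have hfpos : (0:ℝ) < (Nat.factorial m : ℝ) := by
    exact_mod_cast Nat.factorial_pos m
  have key : (4:ℝ) ^ m * ((n:ℝ) / (2 * b)) ^ t
      ≤ (4 * (n : ℝ) / (b : ℝ)) ^ ((n : ℝ) / 2) := by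
    have h4 : (4:ℝ) ^ m ≤ (4:ℝ) ^ ((n:ℝ)/2) := by
      rw [← Real.rpow_natCast 4 m]
      exact Real.rpow_le_rpow_of_exponent_le (by norm_num) hm2
    have hxe : ((n:ℝ) / (2 * b)) ^ t ≤ ((n:ℝ) / (2 * b)) ^ ((n:ℝ)/2) := by
      rw [← Real.rpow_natCast ((n:ℝ) / (2 * b)) t]
      exact Real.rpow_le_rpow_of_exponent_ge hxpos hx1 ht2
    calc (4:ℝ) ^ m * ((n:ℝ) / (2 * b)) ^ t
        ≤ (4:ℝ) ^ ((n:ℝ)/2) * ((n:ℝ) / (2 * b)) ^ ((n:ℝ)/2) := by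
          apply mul_le_mul h4 hxe (by positivity) (by positivity)
      _ = (4 * ((n:ℝ) / (2 * b))) ^ ((n:ℝ)/2) := by
          rw [← Real.mul_rpow (by norm_num) (le_of_lt hxpos)]
      _ ≤ (4 * (n : ℝ) / (b : ℝ)) ^ ((n : ℝ) / 2) := by
          apply Real.rpow_le_rpow (by positivity) _ (by positivity)
          have e1 : (4:ℝ) * ((n:ℝ)/(2*(b:ℝ))) = 2*((n:ℝ)/(b:ℝ)) := by ring
          have e2 : 4*(n:ℝ)/(b:ℝ) = 4*((n:ℝ)/(b:ℝ)) := by ring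
          rw [e1, e2]
          have : (0:ℝ) ≤ (n:ℝ)/(b:ℝ) := by positivity
          linarith
  calc ((Finset.univ.filter (fun f : Fin n → Fin b =>
        ∀ j : Fin b, (Finset.univ.filter (fun x : Fin n => f x = j)).card ≠ 1)).card : ℝ)
      ≤ (b.choose m : ℝ) * (m : ℝ) ^ n := by exact_mod_cast hnat
    _ ≤ ((b:ℝ) ^ m / Nat.factorial m) * (m : ℝ) ^ n := by
        apply mul_le_mul_of_nonneg_right (Nat.choose_le_pow_div m b) (by positivity)
    _ = (b:ℝ) ^ m * (m:ℝ) ^ t * ((m:ℝ) ^ m / Nat.factorial m) := by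
        rw [← hmt, pow_add]; field_simp
    _ ≤ (b:ℝ) ^ m * (m:ℝ) ^ t * (4:ℝ) ^ m := by
        apply mul_le_mul_of_nonneg_left _ (by positivity)
        rw [div_le_iff₀ hfpos]
        exact pow_self_le_four_pow_mul_factorial m
    _ = ((4:ℝ) ^ m * ((n:ℝ) / (2 * b) * ((2 * b) / n * m)) ^ t) * (b:ℝ) ^ m := by
        field_simp
    _ ≤ ((4:ℝ) ^ m * ((n:ℝ) / (2 * b) * b) ^ t) * (b:ℝ) ^ m := by
        apply mul_le_mul_of_nonneg_right _ (by positivity)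
        apply mul_le_mul_of_nonneg_left _ (by positivity)
        apply pow_le_pow_left₀ (by positivity)
        apply mul_le_mul_of_nonneg_left _ (le_of_lt hxpos)
        rw [div_mul_eq_mul_div, div_le_iff₀ hnpos]
        have : (2:ℝ) * m ≤ n := by exact_mod_cast h2m
        nlinarith
    _ = ((4:ℝ) ^ m * ((n:ℝ) / (2 * b)) ^ t) * ((b:ℝ) ^ t * (b:ℝ) ^ m) := by
        rw [mul_pow]; ring
    _ ≤ (4 * (n : ℝ) / (b : ℝ)) ^ ((n : ℝ) / 2) * ((b:ℝ) ^ t * (b:ℝ) ^ m) := by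
        apply mul_le_mul_of_nonneg_right key (by positivity)
    _ = (4 * (n : ℝ) / (b : ℝ)) ^ ((n : ℝ) / 2) * (b : ℝ) ^ n := by
        rw [← pow_add, Nat.add_comm t m, hmt]

/-- `K` independent balls-into-bins experiments, with `2n ≤ b`: the number of
functions `g : Fin K → (Fin n → Fin b)` such that in none of the `K` assignments
some bin contains exactly one ball is at most `((4n/b)^(n/2))^K * b^(nK)`. -/
theorem stmt_2 (n b K : ℕ) (hn : 0 < n) (hb : 0 < b) (hK : 0 < K) (hnb : 2 * n ≤ b) :
    ((Finset.univ.filter (fun g : Fin K → (Fin n → Fin b) =>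
        ∀ i : Fin K, ∀ j : Fin b,
          (Finset.univ.filter (fun x : Fin n => g i x = j)).card ≠ 1)).card : ℝ)
      ≤ ((4 * (n : ℝ) / (b : ℝ)) ^ ((n : ℝ) / 2)) ^ K * (b : ℝ) ^ (n * K) := by
  classical
  have hpi : (Finset.univ.filter (fun g : Fin K → (Fin n → Fin b) =>
        ∀ i : Fin K, ∀ j : Fin b,
          (Finset.univ.filter (fun x : Fin n => g i x = j)).card ≠ 1))
      = Fintype.piFinset (fun _ : Fin K =>
          Finset.univ.filter (fun f : Fin n → Fin b =>
            ∀ j : Fin b, (Finset.univ.filter (fun x : Fin n => f x = j)).card ≠ 1)) := by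
    ext g
    simp [Fintype.mem_piFinset]
  rw [hpi, Fintype.card_piFinset]
  simp only [Finset.prod_const, Finset.card_univ, Fintype.card_fin]
  push_cast
  calc ((Finset.univ.filter (fun f : Fin n → Fin b =>
        ∀ j : Fin b, (Finset.univ.filter (fun x : Fin n => f x = j)).card ≠ 1)).card : ℝ) ^ K
      ≤ ((4 * (n : ℝ) / (b : ℝ)) ^ ((n : ℝ) / 2) * (b : ℝ) ^ n) ^ K :=
        pow_le_pow_left₀ (by positivity) (single_bound n b hn hb hnb) K
    _ = ((4 * (n : ℝ) / (b : ℝ)) ^ ((n : ℝ) / 2)) ^ K * (b : ℝ) ^ (n * K) := by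
        rw [mul_pow, ← pow_mul]
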